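/- For all integers m ≥ 1 and 1 ≤ r ≤ p, every x ∈ ℝ with Δ(x) ∈ (−2, 2), and either root Γ of Γ² − Δ(x)·Γ + 1 = 0, one has p_{mp+r−1}(x) = 2·Re(j_{r,Γ}(x)·Γ^m). (Equation (2.50): representation of p_{mp+r−1} on the interior of the bands.) -/

import Mathlib

open Polynomial Matrix

/-- The one-step transfer matrix `A_k(z)` for periodic OPRL. -/
noncomputable def JacobiA (a b : ℕ → ℝ) (k : ℕ) (z : ℂ) : Matrix (Fin 2) (Fin 2) ℂ :=
  ((a (k + 1) : ℂ))⁻¹ • !![z - (b (k + 1) : ℂ), -(a k : ℂ); (a (k + 1) : ℂ), 0]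

/-- The transfer matrix `T_n(z) = A_{n-1}(z) ⋯ A_0(z)`. -/
noncomputable def JacobiT (a b : ℕ → ℝ) : ℕ → ℂ → Matrix (Fin 2) (Fin 2) ℂ
  | 0, _ => 1
  | n + 1, z => JacobiA a b n z * JacobiT a b n z

/-- The discriminant `Δ(z) = tr T_p(z)`. -/
noncomputable def JacobiDisc (a b : ℕ → ℝ) (p : ℕ) (z : ℂ) : ℂ :=
  (JacobiT a b p z).trace

/-- The boundary-value Jost function `j_{r,Γ}(x) = a_Γ(x)·(T_r)₂₂ + b_Γ(x)·(T_r)₂₁`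
with `a_Γ(x) = (T_p)₂₁/(Γ - Γ⁻¹)`, `b_Γ(x) = ((T_p)₁₁ - Γ⁻¹)/(Γ - Γ⁻¹)`. -/
noncomputable def JacobiJostBand (a b : ℕ → ℝ) (p r : ℕ) (Γ : ℂ) (x : ℝ) : ℂ :=
  (JacobiT a b p (x : ℂ) 1 0 / (Γ - Γ⁻¹)) * (JacobiT a b r (x : ℂ) 1 1) +
    ((JacobiT a b p (x : ℂ) 0 0 - Γ⁻¹) / (Γ - Γ⁻¹)) * (JacobiT a b r (x : ℂ) 1 0)

/-!
Periodicity gives `T_{mp+r} = T_r T_p^m`, and the `(2,1)` entry of `T_{n+1}` is `p_n`. Since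
`det T_p = a_0 / a_p = 1` and `tr T_p = Γ + Γ⁻¹`, Cayley–Hamilton yields
`(Γ - Γ⁻¹) T_p^m = (Γ^m - Γ^{-m}) T_p - (Γ^{m-1} - Γ^{1-m})`, so `p_{mp+r-1}` is the sum of the
two Jost terms for `Γ` and `Γ⁻¹`. On the band `Γ⁻¹ = conj Γ` and `T_n(x)` is real, so these two
terms are complex conjugate.
-/

theorem Matrix.sq_eq_trace_smul_sub_det_smul {R : Type*} [CommRing R] [Nontrivial R]
    (M : Matrix (Fin 2) (Fin 2) R) : M ^ 2 = M.trace • M - M.det • 1 := by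
  have h := M.aeval_self_charpoly
  rw [charpoly_fin_two] at h
  simp only [map_add, map_sub, map_pow, aeval_X, map_mul, aeval_C, Algebra.algebraMap_eq_smul_one,
    smul_mul_assoc, one_mul] at h
  rw [← sub_eq_zero, ← h]; abel

theorem Matrix.smul_pow_of_trace_eq_add_inv {K : Type*} [Field K] (M : Matrix (Fin 2) (Fin 2) K)
    {γ : K} (hγ : γ ≠ 0) (htr : M.trace = γ + γ⁻¹) (hdet : M.det = 1) (m : ℕ) :
    (γ - γ⁻¹) • M ^ m = (γ ^ m - γ⁻¹ ^ m) • M - (γ ^ m * γ⁻¹ - γ⁻¹ ^ m * γ) • 1 := by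
  have hγγ : γ * γ⁻¹ = 1 := mul_inv_cancel₀ hγ
  induction m with
  | zero => rw [pow_zero]; module
  | succ m ih =>
    rw [pow_succ, ← smul_mul_assoc, ih, sub_mul, smul_mul_assoc, ← sq,
      sq_eq_trace_smul_sub_det_smul, htr, hdet, smul_mul_assoc, one_mul]
    match_scalars
    · ring
    · linear_combination (γ ^ m - γ⁻¹ ^ m) * hγγ

def jostCoeff {K : Type*} [Field K] (M R : Matrix (Fin 2) (Fin 2) K) (γ : K) : K :=
  M 1 0 / (γ - γ⁻¹) * R 1 1 + (M 0 0 - γ⁻¹) / (γ - γ⁻¹) * R 1 0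

theorem mul_pow_one_zero_eq_jostCoeff {K : Type*} [Field K] (M R : Matrix (Fin 2) (Fin 2) K)
    {γ : K} (hγ : γ - γ⁻¹ ≠ 0) (htr : M.trace = γ + γ⁻¹) (hdet : M.det = 1) (m : ℕ) :
    (R * M ^ m) 1 0 = jostCoeff M R γ * γ ^ m + jostCoeff M R γ⁻¹ * γ⁻¹ ^ m := by
  have hγ0 : γ ≠ 0 := by rintro rfl; simp at hγ
  have hpow := M.smul_pow_of_trace_eq_add_inv hγ0 htr hdet m
  have h00 := congrFun₂ hpow 0 0
  have h10 := congrFun₂ hpow 1 0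
  simp only [Matrix.smul_apply, Matrix.sub_apply, one_apply_eq, one_apply_ne one_ne_zero,
    smul_eq_mul, mul_one, mul_zero, sub_zero] at h00 h10
  have hj : (γ - γ⁻¹) * jostCoeff M R γ = M 1 0 * R 1 1 + (M 0 0 - γ⁻¹) * R 1 0 := by
    rw [jostCoeff, div_mul_eq_mul_div, div_mul_eq_mul_div, ← add_div, mul_div_cancel₀ _ hγ]
  have hj' : (γ - γ⁻¹) * jostCoeff M R γ⁻¹ = -(M 1 0 * R 1 1 + (M 0 0 - γ) * R 1 0) := by
    rw [jostCoeff, inv_inv, div_mul_eq_mul_div, div_mul_eq_mul_div, ← add_div, ← neg_sub γ γ⁻¹,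
      div_neg, mul_neg, mul_div_cancel₀ _ hγ]
  refine mul_left_cancel₀ hγ ?_
  rw [mul_apply, Fin.sum_univ_two]
  linear_combination R 1 0 * h00 + R 1 1 * h10 - γ ^ m * hj - γ⁻¹ ^ m * hj'

theorem jostCoeff_inv_eq_conj (M R : Matrix (Fin 2) (Fin 2) ℂ) {γ : ℂ}
    (hM : ∀ i j, starRingEnd ℂ (M i j) = M i j) (hR : ∀ i j, starRingEnd ℂ (R i j) = R i j)
    (hγ : starRingEnd ℂ γ = γ⁻¹) :
    jostCoeff M R γ⁻¹ = starRingEnd ℂ (jostCoeff M R γ) := by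
  simp only [jostCoeff, map_add, map_mul, map_div₀, map_sub, map_inv₀, hM, hR, hγ, inv_inv]

theorem mul_pow_one_zero_eq_two_mul_re (M R : Matrix (Fin 2) (Fin 2) ℂ) {γ : ℂ}
    (hM : ∀ i j, starRingEnd ℂ (M i j) = M i j) (hR : ∀ i j, starRingEnd ℂ (R i j) = R i j)
    (hγ : starRingEnd ℂ γ = γ⁻¹) (hγ' : γ - γ⁻¹ ≠ 0) (htr : M.trace = γ + γ⁻¹)
    (hdet : M.det = 1) (m : ℕ) :
    (R * M ^ m) 1 0 = (2 * (jostCoeff M R γ * γ ^ m).re : ℝ) := by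
  rw [mul_pow_one_zero_eq_jostCoeff M R hγ' htr hdet, jostCoeff_inv_eq_conj M R hM hR hγ, ← hγ,
    ← map_pow, ← map_mul, Complex.add_conj]

theorem add_inv_eq_of_sq_sub_mul_add_one_eq_zero {K : Type*} [Field K] {t γ : K}
    (h : γ ^ 2 - t * γ + 1 = 0) : γ + γ⁻¹ = t := by
  have hγ : γ ≠ 0 := by rintro rfl; simp at h
  field_simp
  linear_combination h

theorem Complex.im_ne_zero_of_sq_sub_mul_add_one_eq_zero {t : ℝ} (ht : t ∈ Set.Ioo (-2) 2)
    {γ : ℂ} (h : γ ^ 2 - t * γ + 1 = 0) : γ.im ≠ 0 := by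
  intro him
  have hre : γ.re ^ 2 - t * γ.re + 1 = 0 := by
    simpa [sq, him] using congrArg Complex.re h
  nlinarith [sq_nonneg (2 * γ.re - t), ht.1, ht.2]

theorem Complex.conj_eq_inv_of_sq_sub_mul_add_one_eq_zero {t : ℝ} (ht : t ∈ Set.Ioo (-2) 2)
    {γ : ℂ} (h : γ ^ 2 - t * γ + 1 = 0) : starRingEnd ℂ γ = γ⁻¹ := by
  have hconj : starRingEnd ℂ γ ^ 2 - t * starRingEnd ℂ γ + 1 = 0 := by
    simpa using congrArg (starRingEnd ℂ) h
  have hne : γ - starRingEnd ℂ γ ≠ 0 := by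
    rw [Complex.sub_conj]
    simpa using im_ne_zero_of_sq_sub_mul_add_one_eq_zero ht h
  have hsum : γ + starRingEnd ℂ γ = t :=
    mul_left_cancel₀ hne (by linear_combination h - hconj)
  linear_combination hsum - add_inv_eq_of_sq_sub_mul_add_one_eq_zero h

theorem jacobiA_det (a b : ℕ → ℝ) (k : ℕ) (z : ℂ) :
    (JacobiA a b k z).det = a k / a (k + 1) := by
  rw [JacobiA, det_smul, det_fin_two_of, Fintype.card_fin]
  by_cases h : (a (k + 1) : ℂ) = 0
  · simp [h]
  · field_simp
    ring

theorem jacobiT_det (a b : ℕ → ℝ) (ha : ∀ k, 1 ≤ k → a k ≠ 0) (z : ℂ) (n : ℕ) :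
    (JacobiT a b (n + 1) z).det = a 0 / a (n + 1) := by
  induction n with
  | zero => rw [JacobiT, det_mul, jacobiA_det, JacobiT, det_one, mul_one]
  | succ n ih =>
    have han : (a (n + 1) : ℂ) ≠ 0 := by exact_mod_cast ha (n + 1) (by omega)
    rw [JacobiT, det_mul, jacobiA_det, ih]
    field_simp

theorem jacobiT_conj_apply (a b : ℕ → ℝ) (n : ℕ) (x : ℝ) (i j : Fin 2) :
    starRingEnd ℂ (JacobiT a b n x i j) = JacobiT a b n x i j := by
  induction n generalizing i j with
  | zero => fin_cases i <;> fin_cases j <;> simp [JacobiT]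
  | succ n ih =>
    simp only [JacobiT, mul_apply, Fin.sum_univ_two, map_add, map_mul, ih]
    fin_cases i <;> fin_cases j <;> simp [JacobiA, Complex.conj_ofReal]

theorem jacobiA_add_period (p : ℕ) (a b : ℕ → ℝ) (hpera : ∀ n, 1 ≤ n → a (n + p) = a n)
    (hperb : ∀ n, 1 ≤ n → b (n + p) = b n) (ha0 : a 0 = a p) (k : ℕ) (z : ℂ) :
    JacobiA a b (k + p) z = JacobiA a b k z := by
  have hak : a (k + p) = a k := by
    cases k with
    | zero => rw [zero_add, ha0]
    | succ k => exact hpera (k + 1) (by omega)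
  rw [JacobiA, JacobiA, hak, add_right_comm, hpera (k + 1) (by omega), hperb (k + 1) (by omega)]

theorem jacobiT_add_of_periodic (p : ℕ) (a b : ℕ → ℝ) (z : ℂ)
    (hA : ∀ k, JacobiA a b (k + p) z = JacobiA a b k z) (n : ℕ) :
    JacobiT a b (n + p) z = JacobiT a b n z * JacobiT a b p z := by
  induction n with
  | zero => rw [zero_add, JacobiT, one_mul]
  | succ n ih => rw [add_right_comm, JacobiT, ih, hA, JacobiT, mul_assoc]

theorem jacobiT_mul_add_of_periodic (p : ℕ) (a b : ℕ → ℝ) (z : ℂ)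
    (hA : ∀ k, JacobiA a b (k + p) z = JacobiA a b k z) (m r : ℕ) :
    JacobiT a b (m * p + r) z = JacobiT a b r z * JacobiT a b p z ^ m := by
  induction m with
  | zero => rw [zero_mul, zero_add, pow_zero, mul_one]
  | succ m ih =>
    rw [add_mul, one_mul, add_right_comm, jacobiT_add_of_periodic p a b z hA, ih, pow_succ,
      mul_assoc]

theorem jacobiT_succ_apply_zero_zero (a b : ℕ → ℝ) (n : ℕ) (z : ℂ) :
    JacobiT a b (n + 1) z 0 0 =
      (a (n + 1) : ℂ)⁻¹ *
        ((z - b (n + 1)) * JacobiT a b n z 0 0 - a n * JacobiT a b n z 1 0) := by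
  simp only [JacobiT, JacobiA, mul_apply, Fin.sum_univ_two, smul_of, smul_cons, smul_eq_mul,
    smul_empty, of_apply, cons_val', cons_val_fin_one, cons_val_zero, cons_val_one]
  ring

theorem jacobiT_succ_apply_one_zero (a b : ℕ → ℝ) (n : ℕ) (hn : a (n + 1) ≠ 0) (z : ℂ) :
    JacobiT a b (n + 1) z 1 0 = JacobiT a b n z 0 0 := by
  have hn' : (a (n + 1) : ℂ) ≠ 0 := by exact_mod_cast hn
  simp [JacobiT, JacobiA, mul_apply, Fin.sum_univ_two, hn']

theorem jacobiT_succ_first_column (a b : ℕ → ℝ) (ha : ∀ k, 1 ≤ k → a k ≠ 0)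
    (P : ℕ → Polynomial ℝ) (hP0 : P 0 = 1)
    (hPrec0 : (X : Polynomial ℝ) * P 0 = a 1 • P 1 + b 1 • P 0)
    (hPrec : ∀ n, 1 ≤ n →
      (X : Polynomial ℝ) * P n = a (n + 1) • P (n + 1) + b (n + 1) • P n + a n • P (n - 1))
    (x : ℝ) (n : ℕ) :
    JacobiT a b (n + 1) x 0 0 = (P (n + 1)).eval x ∧
      JacobiT a b (n + 1) x 1 0 = (P n).eval x := by
  induction n with
  | zero =>
    have h1 : ((x : ℝ) : ℂ) = ((a 1 * (P 1).eval x + b 1 : ℝ) : ℂ) :=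
      congrArg _ (by simpa [hP0] using congrArg (eval x) hPrec0)
    have ha1 : (a 1 : ℂ) ≠ 0 := by exact_mod_cast ha 1 le_rfl
    push_cast at h1
    rw [jacobiT_succ_apply_zero_zero, jacobiT_succ_apply_one_zero a b 0 (ha 1 le_rfl)]
    simp only [JacobiT, one_apply_eq, one_apply_ne one_ne_zero, hP0, eval_one]
    constructor
    · field_simp
      linear_combination h1
    · simp
  | succ n ih =>
    have h2 : ((x * (P (n + 1)).eval x : ℝ) : ℂ) = ((a (n + 1 + 1) * (P (n + 1 + 1)).eval x
        + b (n + 1 + 1) * (P (n + 1)).eval x + a (n + 1) * (P n).eval x : ℝ) : ℂ) :=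
      congrArg _ (by simpa using congrArg (eval x) (hPrec (n + 1) (by omega)))
    have ha2 : (a (n + 1 + 1) : ℂ) ≠ 0 := by exact_mod_cast ha (n + 2) (by omega)
    push_cast at h2
    rw [jacobiT_succ_apply_zero_zero, jacobiT_succ_apply_one_zero a b _ (ha (n + 2) (by omega)),
      ih.1, ih.2]
    refine ⟨?_, rfl⟩
    field_simp
    linear_combination h2

theorem jacobiJostBand_eq_jostCoeff (a b : ℕ → ℝ) (p r : ℕ) (Γ : ℂ) (x : ℝ) :
    JacobiJostBand a b p r Γ x = jostCoeff (JacobiT a b p x) (JacobiT a b r x) Γ := rfl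

theorem oprl_periodic_band_representation_general
    (p : ℕ) (hp : 1 ≤ p) (a b : ℕ → ℝ)
    (ha : ∀ n, 1 ≤ n → 0 < a n)
    (hpera : ∀ n, 1 ≤ n → a (n + p) = a n)
    (hperb : ∀ n, 1 ≤ n → b (n + p) = b n)
    (ha0 : a 0 = a p)
    (P : ℕ → Polynomial ℝ)
    (hP0 : P 0 = 1)
    (hPrec0 : (X : Polynomial ℝ) * P 0 = a 1 • P 1 + b 1 • P 0)
    (hPrec : ∀ n, 1 ≤ n →
      (X : Polynomial ℝ) * P n = a (n + 1) • P (n + 1) + b (n + 1) • P n + a n • P (n - 1))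
    (m : ℕ) (r : ℕ) (hr1 : 1 ≤ r)
    (x : ℝ)
    (hx : ∃ t : ℝ, t ∈ Set.Ioo (-2 : ℝ) 2 ∧ JacobiDisc a b p (x : ℂ) = (t : ℂ))
    (Γ : ℂ)
    (hΓ : Γ ^ 2 - JacobiDisc a b p (x : ℂ) * Γ + 1 = 0) :
    (P (m * p + r - 1)).eval x = 2 * (JacobiJostBand a b p r Γ x * Γ ^ m).re := by
  obtain ⟨t, ht, hΔ⟩ := hx
  rw [hΔ] at hΓ
  have ha' : ∀ k, 1 ≤ k → a k ≠ 0 := fun k hk => (ha k hk).ne'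
  have hconj := Complex.conj_eq_inv_of_sq_sub_mul_add_one_eq_zero ht hΓ
  have hD : Γ - Γ⁻¹ ≠ 0 := by
    rw [← hconj, Complex.sub_conj]
    simpa using Complex.im_ne_zero_of_sq_sub_mul_add_one_eq_zero ht hΓ
  have htr : (JacobiT a b p x).trace = Γ + Γ⁻¹ :=
    hΔ.trans (add_inv_eq_of_sq_sub_mul_add_one_eq_zero hΓ).symm
  have hdet : (JacobiT a b p x).det = 1 := by
    obtain ⟨q, rfl⟩ := Nat.exists_eq_add_of_le' hp
    rw [jacobiT_det a b ha', ha0, div_self (by exact_mod_cast ha' _ hp)]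
  obtain ⟨n, hn⟩ : ∃ n, m * p + r = n + 1 := ⟨m * p + r - 1, by omega⟩
  have hP := (jacobiT_succ_first_column a b ha' P hP0 hPrec0 hPrec x n).2
  rw [jacobiJostBand_eq_jostCoeff, show m * p + r - 1 = n by omega]
  rw [← hn, jacobiT_mul_add_of_periodic p a b x (jacobiA_add_period p a b hpera hperb ha0 · x),
    mul_pow_one_zero_eq_two_mul_re _ _ (jacobiT_conj_apply a b p x) (jacobiT_conj_apply a b r x)
      hconj hD htr hdet] at hP
  exact_mod_cast hP.symm

/-- **Eq. (2.50).** On the interior of the bands, for `m ≥ 1` and `1 ≤ r ≤ p`,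
`p_{mp+r-1}(x) = 2 Re(j_{r,Γ}(x) Γ^m)` for either root `Γ` of `Γ² - Δ(x)Γ + 1 = 0`. -/
theorem oprl_periodic_band_representation
    (p : ℕ) (hp : 1 ≤ p) (a b : ℕ → ℝ)
    (ha : ∀ n, 1 ≤ n → 0 < a n)
    (hpera : ∀ n, 1 ≤ n → a (n + p) = a n)
    (hperb : ∀ n, 1 ≤ n → b (n + p) = b n)
    (ha0 : a 0 = a p)
    (P : ℕ → Polynomial ℝ)
    (hP0 : P 0 = 1)
    (hPrec0 : (X : Polynomial ℝ) * P 0 = a 1 • P 1 + b 1 • P 0)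
    (hPrec : ∀ n, 1 ≤ n →
      (X : Polynomial ℝ) * P n = a (n + 1) • P (n + 1) + b (n + 1) • P n + a n • P (n - 1))
    (m : ℕ) (hm : 1 ≤ m) (r : ℕ) (hr1 : 1 ≤ r) (hrp : r ≤ p)
    (x : ℝ)
    (hx : ∃ t : ℝ, t ∈ Set.Ioo (-2 : ℝ) 2 ∧ JacobiDisc a b p (x : ℂ) = (t : ℂ))
    (Γ : ℂ)
    (hΓ : Γ ^ 2 - JacobiDisc a b p (x : ℂ) * Γ + 1 = 0) :
    (P (m * p + r - 1)).eval x = 2 * (JacobiJostBand a b p r Γ x * Γ ^ m).re :=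
  oprl_periodic_band_representation_general p hp a b ha hpera hperb ha0 P hP0 hPrec0 hPrec m r hr1 x
    hx Γ hΓ
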